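/- In any edge clique cover F of the icosahedron graph, every vertex v belongs to at least 3 cliques of F. -/

import Mathlib

open SimpleGraph

/-- The competition graph of a digraph `D` (given as a relation): distinct vertices
`x`, `y` are adjacent iff they have a common out-neighbor in `D`. -/
def CompetitionGraph {V : Type*} (D : V → V → Prop) : SimpleGraph V where
  Adj x y := x ≠ y ∧ ∃ v, D x v ∧ D y v
  symm := by constructor; rintro x y ⟨h, v, hx, hy⟩; exact ⟨h.symm, v, hy, hx⟩
  loopless := by constructor; rintro x ⟨h, -⟩; exact h rfl

/-- A digraph is acyclic iff it has no directed cycle, i.e. no vertex reaches itself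
by a nonempty directed walk. -/
def DigraphAcyclic {V : Type*} (D : V → V → Prop) : Prop :=
  ∀ v, ¬ Relation.TransGen D v v

/-- The graph `G` together with `k` additional isolated vertices. -/
def addIsolated {V : Type*} (G : SimpleGraph V) (k : ℕ) : SimpleGraph (V ⊕ Fin k) where
  Adj a b := ∃ x y, a = Sum.inl x ∧ b = Sum.inl y ∧ G.Adj x y
  symm := by constructor; rintro a b ⟨x, y, rfl, rfl, h⟩; exact ⟨y, x, rfl, rfl, h.symm⟩
  loopless := by
    constructor
    rintro a ⟨x, y, rfl, hy, h⟩
    obtain rfl := Sum.inl_injective hy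
    exact G.irrefl h

/-- `G` plus `k` isolated vertices is the competition graph of some acyclic digraph. -/
def IsCompetitionWitness {V : Type*} (G : SimpleGraph V) (k : ℕ) : Prop :=
  ∃ D : (V ⊕ Fin k) → (V ⊕ Fin k) → Prop,
    DigraphAcyclic D ∧ CompetitionGraph D = addIsolated G k

/-- The competition number of `G`: the least `k` such that `G` plus `k` isolated
vertices is the competition graph of an acyclic digraph. -/
noncomputable def compNum {V : Type*} (G : SimpleGraph V) : ℕ :=
  sInf {k | IsCompetitionWitness G k}

/-- The generalized edge clique cover number `θ_E(F; H)`: the minimum number of cliques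
of `G` contained in the vertex set `H` (i.e. cliques of the induced subgraph on `H`)
needed so that every edge in `F` has both endpoints in some clique of the family. -/
noncomputable def thetaEOn {V : Type*} (G : SimpleGraph V) (F : Set (Sym2 V)) (H : Set V) : ℕ :=
  sInf {n | ∃ f : Fin n → Set V,
    (∀ i, f i ⊆ H ∧ G.IsClique (f i)) ∧ ∀ e ∈ F, ∃ i, ∀ x ∈ e, x ∈ f i}

/-- The edge clique cover number `θ_E(G)`. -/
noncomputable def thetaE {V : Type*} (G : SimpleGraph V) : ℕ :=
  thetaEOn G G.edgeSet Set.univ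

/-- The vertex clique cover number of the subgraph of `G` induced on `S`: the minimum
number of cliques of `G` contained in `S` whose union covers `S`. -/
noncomputable def thetaVOn {V : Type*} (G : SimpleGraph V) (S : Set V) : ℕ :=
  sInf {n | ∃ f : Fin n → Set V,
    (∀ i, f i ⊆ S ∧ G.IsClique (f i)) ∧ ∀ v ∈ S, ∃ i, v ∈ f i}

/-- The closed neighborhood `N_G[U]` of a vertex subset. -/
def closedNbhd {V : Type*} (G : SimpleGraph V) (U : Set V) : Set V :=
  U ∪ {v | ∃ u ∈ U, G.Adj u v}

/-- The set `E_G[U]` of edges of `G` with at least one endpoint in `U`. -/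
def incidentEdges {V : Type*} (G : SimpleGraph V) (U : Set V) : Set (Sym2 V) :=
  {e | e ∈ G.edgeSet ∧ ∃ x ∈ e, x ∈ U}

/-- The edge list of the icosahedron graph (pentagonal antiprism on `1..10` together
with apexes `0` and `11`). -/
def icosaEdges : List (ℕ × ℕ) :=
  [(0,1),(0,2),(0,3),(0,4),(0,5),(1,2),(2,3),(3,4),(4,5),(5,1),
   (11,6),(11,7),(11,8),(11,9),(11,10),(6,7),(7,8),(8,9),(9,10),(10,6),
   (1,6),(1,7),(2,7),(2,8),(3,8),(3,9),(4,9),(4,10),(5,10),(5,6)]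

/-- The icosahedron graph: the 5-regular graph on 12 vertices with 30 edges
arising as the 1-skeleton of the icosahedron. -/
def Icosahedron : SimpleGraph (Fin 12) :=
  SimpleGraph.fromRel (fun i j => ((i : ℕ), (j : ℕ)) ∈ icosaEdges)

/-
An edge clique cover restricts, at a vertex `v`, to a clique cover of the neighbourhood of `v`:
the cliques through `v` properly colour the complement of `G[N(v)]`, so `v` lies in at least
`χ(Gᶜ[N(v)])` of them. In the icosahedron `N(v)` induces `C₅`, whose complement is again a
`5`-cycle (the pentagram), of chromatic number `3`.
-/

namespace SimpleGraph

variable {V W ι : Type*} {G : SimpleGraph V} {H : SimpleGraph W}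

def IsEdgeCliqueCover (G : SimpleGraph V) (f : ι → Set V) : Prop :=
  (∀ i, G.IsClique (f i)) ∧ ∀ e ∈ G.edgeSet, ∃ i, ∀ x ∈ e, x ∈ f i

theorem IsEdgeCliqueCover.colorable_ncard_setOf_mem [Finite ι] {f : ι → Set V}
    (hf : G.IsEdgeCliqueCover f) {v : V} (w : H →g Gᶜ) (hw : ∀ x, G.Adj v (w x)) :
    H.Colorable {i | v ∈ f i}.ncard := by
  choose c hc using fun x => hf.2 s(v, w x) (G.mem_edgeSet.mpr (hw x))
  have : Fintype {i | v ∈ f i} := Fintype.ofFinite _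
  rw [Set.ncard_eq_toFinset_card', Set.toFinset_card]
  refine (Coloring.mk (fun x => ⟨c x, hc x v (Sym2.mem_mk_left _ _)⟩) ?_).colorable
  intro x y hxy hcxy
  obtain ⟨hne, hnadj⟩ := (compl_adj G _ _).mp (w.map_rel hxy)
  have hy : w y ∈ f (c x) := by
    rw [show c x = c y from congrArg Subtype.val hcxy]
    exact hc y (w y) (Sym2.mem_mk_right _ _)
  exact hnadj (hf.1 (c x) (hc x (w x) (Sym2.mem_mk_right _ _)) hy hne)

theorem IsEdgeCliqueCover.three_le_ncard_setOf_mem_of_cycleGraph_five [Finite ι]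
    {f : ι → Set V} (hf : G.IsEdgeCliqueCover f) {v : V} (w : cycleGraph 5 →g Gᶜ)
    (hw : ∀ x, G.Adj v (w x)) :
    3 ≤ {i | v ∈ f i}.ncard := by
  have h := (hf.colorable_ncard_setOf_mem w hw).chromaticNumber_le
  rw [chromaticNumber_cycleGraph_of_odd 5 (by norm_num) (by decide)] at h
  exact_mod_cast h

def cycleGraphHomOfAdjSucc {n : ℕ} (p : Fin (n + 2) → V) (hp : ∀ k, G.Adj (p k) (p (k + 1))) :
    cycleGraph (n + 2) →g G where
  toFun := p
  map_rel' {j k} h := by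
    rcases cycleGraph_adj.mp h with h | h
    · rw [sub_eq_iff_eq_add'.mp h]
      exact (hp k).symm
    · rw [sub_eq_iff_eq_add'.mp h]
      exact hp j

end SimpleGraph

instance : DecidableRel Icosahedron.Adj := fun _ _ => by unfold Icosahedron; infer_instance

/-- The neighbours of each vertex, in an order in which cyclically consecutive ones are
non-adjacent. -/
def icosahedronPentagram : Fin 12 → Fin 5 → Fin 12 :=
  ![![1, 3, 5, 2, 4], ![0, 6, 2, 5, 7], ![0, 7, 3, 1, 8], ![0, 8, 4, 2, 9],
    ![0, 9, 5, 3, 10], ![0, 6, 4, 1, 10], ![1, 10, 7, 5, 11], ![1, 8, 6, 2, 11],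
    ![2, 9, 7, 3, 11], ![3, 10, 8, 4, 11], ![4, 6, 9, 5, 11], ![6, 8, 10, 7, 9]]

theorem icosahedron_adj_pentagram : ∀ v k, Icosahedron.Adj v (icosahedronPentagram v k) := by
  decide

theorem icosahedron_compl_adj_pentagram_succ :
    ∀ v k, Icosahedronᶜ.Adj (icosahedronPentagram v k) (icosahedronPentagram v (k + 1)) := by
  decide

theorem icosahedron_vertex_in_three_cliques (n : ℕ) (f : Fin n → Set (Fin 12))
    (hclique : ∀ i, Icosahedron.IsClique (f i))
    (hcover : ∀ e ∈ Icosahedron.edgeSet, ∃ i, ∀ x ∈ e, x ∈ f i)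
    (v : Fin 12) :
    3 ≤ {i : Fin n | v ∈ f i}.ncard :=
  IsEdgeCliqueCover.three_le_ncard_setOf_mem_of_cycleGraph_five ⟨hclique, hcover⟩
    (cycleGraphHomOfAdjSucc _ (icosahedron_compl_adj_pentagram_succ v))
    (icosahedron_adj_pentagram v)
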